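/- Let M be a pointed metric space and let Y be a real Banach space such that the pair (M, Y) has the Lip-BPB property for Lipschitz compact maps. Then for every compact Hausdorff topological space K, the pair (M, C(K, Y)) has the Lip-BPB property for Lipschitz compact maps, where C(K, Y) is the Banach space of continuous functions from K to Y with the supremum norm. -/
import Mathlib


open Set Metric NNReal MeasureTheory

/-- A Lipschitz map vanishing at the base point `z`, i.e. an element of `Lip₀(M,Y)`. -/
def IsLip0 {M Y : Type*} [MetricSpace M] [NormedAddCommGroup Y]
    (z : M) (F : M → Y) : Prop :=
  (∃ K : ℝ≥0, LipschitzWith K F) ∧ F z = 0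

/-- The Lipschitz norm `‖F‖_L = sup {‖F p - F q‖ / d(p,q) : p ≠ q}`. -/
noncomputable def lipNorm {M Y : Type*} [MetricSpace M] [NormedAddCommGroup Y]
    (F : M → Y) : ℝ :=
  sSup {r : ℝ | ∃ p q : M, p ≠ q ∧ r = ‖F p - F q‖ / dist p q}

/-- `F` strongly attains its norm. -/
def StronglyAttains {M Y : Type*} [MetricSpace M] [NormedAddCommGroup Y]
    (F : M → Y) : Prop :=
  ∃ p q : M, p ≠ q ∧ ‖F p - F q‖ = lipNorm F * dist p q

/-- `F` is Lipschitz compact: its Lipschitz image is relatively compact. -/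
def IsLipCompact {M Y : Type*} [MetricSpace M] [NormedAddCommGroup Y] [NormedSpace ℝ Y]
    (F : M → Y) : Prop :=
  IsCompact (closure {y : Y | ∃ p q : M, p ≠ q ∧ y = (dist p q)⁻¹ • (F p - F q)})

/-- The pair `(M,Y)` has the Lip-BPB property witnessed by the function `η`. -/
def LipBPBWith (M : Type*) [MetricSpace M] (z : M)
    (Y : Type*) [NormedAddCommGroup Y] (η : ℝ → ℝ) : Prop :=
  (∀ ε > 0, η ε > 0) ∧
  ∀ ε > 0, ∀ F : M → Y, IsLip0 z F → lipNorm F = 1 →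
    ∀ p q : M, p ≠ q → ‖F p - F q‖ > (1 - η ε) * dist p q →
      ∃ G : M → Y, IsLip0 z G ∧ ∃ r s : M, r ≠ s ∧
        ‖G r - G s‖ = dist r s ∧ lipNorm G = 1 ∧
        lipNorm (fun x => G x - F x) < ε ∧
        (dist p r + dist q s) / dist p q < ε

/-- The pair `(M,Y)` has the Lip-BPB property. -/
def LipBPB (M : Type*) [MetricSpace M] (z : M)
    (Y : Type*) [NormedAddCommGroup Y] : Prop :=
  ∃ η : ℝ → ℝ, LipBPBWith M z Y η

/-- The pair `(M,Y)` has the Lip-BPB property for Lipschitz compact maps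
witnessed by the function `η`. -/
def LipBPBCompactWith (M : Type*) [MetricSpace M] (z : M)
    (Y : Type*) [NormedAddCommGroup Y] [NormedSpace ℝ Y] (η : ℝ → ℝ) : Prop :=
  (∀ ε > 0, η ε > 0) ∧
  ∀ ε > 0, ∀ F : M → Y, IsLip0 z F → IsLipCompact F → lipNorm F = 1 →
    ∀ p q : M, p ≠ q → ‖F p - F q‖ > (1 - η ε) * dist p q →
      ∃ G : M → Y, IsLip0 z G ∧ IsLipCompact G ∧ ∃ r s : M, r ≠ s ∧
        ‖G r - G s‖ = dist r s ∧ lipNorm G = 1 ∧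
        lipNorm (fun x => G x - F x) < ε ∧
        (dist p r + dist q s) / dist p q < ε

/-- The pair `(M,Y)` has the Lip-BPB property for Lipschitz compact maps. -/
def LipBPBCompact (M : Type*) [MetricSpace M] (z : M)
    (Y : Type*) [NormedAddCommGroup Y] [NormedSpace ℝ Y] : Prop :=
  ∃ η : ℝ → ℝ, LipBPBCompactWith M z Y η

/-- `SA(M,Y)` is dense in `Lip₀(M,Y)`. -/
def SADense (M : Type*) [MetricSpace M] (z : M)
    (Y : Type*) [NormedAddCommGroup Y] : Prop :=
  ∀ F : M → Y, IsLip0 z F → ∀ ε > 0,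
    ∃ G : M → Y, IsLip0 z G ∧ StronglyAttains G ∧ lipNorm (fun x => G x - F x) < ε

/-- `SA_K(M,Y)` is dense in `Lipc(M,Y)`. -/
def SAKDense (M : Type*) [MetricSpace M] (z : M)
    (Y : Type*) [NormedAddCommGroup Y] [NormedSpace ℝ Y] : Prop :=
  ∀ F : M → Y, IsLip0 z F → IsLipCompact F → ∀ ε > 0,
    ∃ G : M → Y, IsLip0 z G ∧ IsLipCompact G ∧ StronglyAttains G ∧
      lipNorm (fun x => G x - F x) < ε

section Aux

variable {M Y : Type*} [MetricSpace M] [NormedAddCommGroup Y]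

lemma lip_mem_le {F : M → Y} {C : ℝ} (hC : ∀ x y : M, ‖F x - F y‖ ≤ C * dist x y)
    {r : ℝ} (hr : r ∈ {r : ℝ | ∃ p q : M, p ≠ q ∧ r = ‖F p - F q‖ / dist p q}) : r ≤ C := by
  obtain ⟨p, q, hpq, rfl⟩ := hr
  rw [div_le_iff₀ (dist_pos.2 hpq)]
  exact hC p q

lemma lipNorm_nonneg (F : M → Y) : 0 ≤ lipNorm F :=
  Real.sSup_nonneg (by rintro r ⟨p, q, hpq, rfl⟩; positivity)

lemma lipNorm_le {F : M → Y} {C : ℝ} (hC0 : 0 ≤ C)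
    (hC : ∀ x y : M, ‖F x - F y‖ ≤ C * dist x y) : lipNorm F ≤ C :=
  Real.sSup_le (fun _ hr => lip_mem_le hC hr) hC0

lemma bddAbove_lipSet {F : M → Y} {K : ℝ≥0} (hK : LipschitzWith K F) :
    BddAbove {r : ℝ | ∃ p q : M, p ≠ q ∧ r = ‖F p - F q‖ / dist p q} :=
  ⟨K, fun _ hr => lip_mem_le (fun a b => by
    simpa [dist_eq_norm] using hK.dist_le_mul a b) hr⟩

lemma norm_sub_le_lipNorm {F : M → Y} (hF : ∃ K : ℝ≥0, LipschitzWith K F) (x y : M) :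
    ‖F x - F y‖ ≤ lipNorm F * dist x y := by
  obtain ⟨K, hK⟩ := hF
  rcases eq_or_ne x y with rfl | hxy
  · simp
  have hd : 0 < dist x y := dist_pos.2 hxy
  have h1 : ‖F x - F y‖ / dist x y ≤ lipNorm F :=
    le_csSup (bddAbove_lipSet hK) ⟨x, y, hxy, rfl⟩
  calc ‖F x - F y‖ = ‖F x - F y‖ / dist x y * dist x y := by field_simp
  _ ≤ lipNorm F * dist x y := mul_le_mul_of_nonneg_right h1 hd.le

lemma lipNorm_eq_one {F : M → Y} (h1 : ∀ x y : M, ‖F x - F y‖ ≤ dist x y)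
    {r s : M} (hrs : r ≠ s) (hatt : ‖F r - F s‖ = dist r s) : lipNorm F = 1 := by
  refine le_antisymm (lipNorm_le zero_le_one (by simpa using h1)) ?_
  have hmem : (1 : ℝ) ∈ {r : ℝ | ∃ p q : M, p ≠ q ∧ r = ‖F p - F q‖ / dist p q} :=
    ⟨r, s, hrs, by rw [hatt, div_self (dist_pos.2 hrs).ne']⟩
  exact le_csSup ⟨1, fun t ht => lip_mem_le (fun a b => by simpa using h1 a b) ht⟩ hmem

lemma isCompact_closure_of_subset' {Z : Type*} [TopologicalSpace Z] [T2Space Z]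
    {s t : Set Z} (hs : IsCompact s) (h : t ⊆ s) : IsCompact (closure t) :=
  hs.of_isClosed_subset isClosed_closure (closure_minimal h hs.isClosed)

lemma lipNorm_smul_le {Y : Type*} [NormedAddCommGroup Y] [NormedSpace ℝ Y]
    {F : M → Y} {c : ℝ} (hc : 0 ≤ c) (hF : ∃ K : ℝ≥0, LipschitzWith K F) :
    lipNorm (fun x => c • F x) ≤ c * lipNorm F := by
  refine Real.sSup_le ?_ (mul_nonneg hc (lipNorm_nonneg F))
  rintro r ⟨p, q, hpq, rfl⟩
  have : ‖c • F p - c • F q‖ = c * ‖F p - F q‖ := by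
    rw [← smul_sub, norm_smul, Real.norm_eq_abs, abs_of_nonneg hc]
  rw [this, mul_div_assoc]
  exact mul_le_mul_of_nonneg_left
    (le_csSup (bddAbove_lipSet hF.choose_spec) ⟨p, q, hpq, rfl⟩) hc

end Aux

set_option maxHeartbeats 1000000 in
/-- If `(M, Y)` has the Lip-BPB property for Lipschitz compact maps, then for every compact
Hausdorff space `K`, `(M, C(K, Y))` has the Lip-BPB property for Lipschitz compact maps. -/
theorem lipBPBCompact_continuousMap {M Y : Type*} [MetricSpace M] [CompleteSpace M]
    [NormedAddCommGroup Y] [NormedSpace ℝ Y] [CompleteSpace Y]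
    (z : M) (h : LipBPBCompact M z Y)
    (K : Type*) [TopologicalSpace K] [CompactSpace K] [T2Space K] :
    LipBPBCompact M z C(K, Y) := by
  obtain ⟨ηh, hηpos, hmain⟩ := h
  refine ⟨fun ε => min (min (min (ε/6) 1) (ηh (min (ε/6) 1))) (1/2), fun ε hε => ?_, ?_⟩
  · have hε' : (0:ℝ) < min (ε/6) 1 := lt_min (by linarith) one_pos
    exact lt_min (lt_min hε' (hηpos _ hε')) (by norm_num)
  intro ε hε F hF hFc hF1 p q hpq hnear
  set ηε : ℝ := min (min (min (ε/6) 1) (ηh (min (ε/6) 1))) (1/2) with hηεdef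
  set ε' : ℝ := min (ε/6) 1 with hε'def
  have hε'pos : 0 < ε' := lt_min (by linarith) one_pos
  have hε'le : ε' ≤ ε/6 := min_le_left _ _
  have hηle : ηε ≤ ε' := le_trans (min_le_left _ _) (min_le_left _ _)
  have hηleh : ηε ≤ ηh ε' := le_trans (min_le_left _ _) (min_le_right _ _)
  have hηhalf : ηε ≤ 1/2 := min_le_right _ _
  have hηεpos : 0 < ηε :=
    lt_min (lt_min hε'pos (hηpos _ hε'pos)) (by norm_num)
  have hd : 0 < dist p q := dist_pos.2 hpq
  rcases isEmpty_or_nonempty K with hKe | hKn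
  · exfalso
    have hz : F p - F q = 0 := by ext k; exact isEmptyElim k
    rw [hz, norm_zero] at hnear
    nlinarith
  obtain ⟨KF, hKF⟩ := hF.1
  have hFL : ∀ x y : M, ‖F x - F y‖ ≤ dist x y := fun x y => by
    simpa [hF1] using norm_sub_le_lipNorm ⟨KF, hKF⟩ x y
  have hFk : ∀ (x y : M) (k : K), ‖F x k - F y k‖ ≤ ‖F x - F y‖ := fun x y k => by
    simpa [ContinuousMap.sub_apply] using ContinuousMap.norm_coe_le_norm (F x - F y) k
  -- choose k₀
  have hk0 : ∃ k₀ : K, (1 - ηε) * dist p q < ‖(F p - F q) k₀‖ := by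
    by_contra hcon
    push_neg at hcon
    have : ‖F p - F q‖ ≤ (1 - ηε) * dist p q :=
      (ContinuousMap.norm_le _ (by nlinarith)).2 hcon
    linarith
  obtain ⟨k₀, hk₀⟩ := hk0
  set S : M → Y := fun x => F x k₀ with hSdef
  have hSsub : ∀ x y : M, S x - S y = (F x - F y) k₀ := fun x y => by
    simp [hSdef, ContinuousMap.sub_apply]
  have hSd : ∀ x y : M, ‖S x - S y‖ ≤ dist x y := fun x y =>
    (hFk x y k₀).trans (hFL x y)
  have hSlip : LipschitzWith 1 S := LipschitzWith.of_dist_le_mul fun x y => by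
    rw [dist_eq_norm]; simpa using hSd x y
  set L : ℝ := lipNorm S with hLdef
  have hL1 : L ≤ 1 := lipNorm_le zero_le_one (by simpa using hSd)
  have hLlb : 1 - ηε < L := by
    have hmem : ‖S p - S q‖ / dist p q ≤ L :=
      le_csSup (bddAbove_lipSet hSlip) ⟨p, q, hpq, rfl⟩
    have h2 : 1 - ηε < ‖S p - S q‖ / dist p q := by
      rw [lt_div_iff₀ hd]
      rw [hSsub]; exact hk₀
    linarith
  have hL0 : 0 < L := by linarith
  have hLinv : 1 ≤ L⁻¹ := (one_le_inv₀ hL0).2 hL1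
  set St : M → Y := fun x => L⁻¹ • S x with hStdef
  have hStsub : ∀ x y : M, St x - St y = L⁻¹ • (S x - S y) := fun x y =>
    (smul_sub _ _ _).symm
  have hStnorm : ∀ x y : M, ‖St x - St y‖ = L⁻¹ * ‖S x - S y‖ := fun x y => by
    rw [hStsub, norm_smul, Real.norm_eq_abs, abs_of_nonneg (by positivity)]
  have hStlip : LipschitzWith (Real.toNNReal L⁻¹) St :=
    LipschitzWith.of_dist_le_mul fun x y => by
      rw [dist_eq_norm, hStnorm, Real.coe_toNNReal _ (by positivity)]
      exact mul_le_mul_of_nonneg_left (hSd x y) (by positivity)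
  have hSz : S z = 0 := by simp [hSdef, hF.2]
  have hSt0 : St z = 0 := by simp [hStdef, hSz]
  have hSt1 : lipNorm St = 1 := by
    refine le_antisymm (lipNorm_le zero_le_one fun x y => ?_) ?_
    · rw [one_mul, hStnorm]
      calc L⁻¹ * ‖S x - S y‖ ≤ L⁻¹ * (L * dist x y) :=
            mul_le_mul_of_nonneg_left (norm_sub_le_lipNorm ⟨1, hSlip⟩ x y) (by positivity)
        _ = dist x y := by field_simp
    · have hS_eq : S = fun x => L • St x := by
        funext x
        simp [hStdef, smul_smul, mul_inv_cancel₀ hL0.ne']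
      have hLle : L ≤ L * lipNorm St := by
        nth_rewrite 1 [hLdef, hS_eq]
        exact lipNorm_smul_le hL0.le ⟨Real.toNNReal L⁻¹, hStlip⟩
      nlinarith
  have hStc : IsLipCompact St := by
    have hcont : Continuous (fun f : C(K,Y) => L⁻¹ • f k₀) :=
      (continuous_eval_const k₀).const_smul _
    refine isCompact_closure_of_subset' (hFc.image hcont) ?_
    rintro y ⟨x, x', hxx', rfl⟩
    refine ⟨(dist x x')⁻¹ • (F x - F x'), subset_closure ⟨x, x', hxx', rfl⟩, ?_⟩
    simp only [ContinuousMap.smul_apply, ContinuousMap.sub_apply]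
    rw [hStsub, hSsub, ContinuousMap.sub_apply, smul_comm]
  have hnear' : ‖St p - St q‖ > (1 - ηh ε') * dist p q := by
    have h1 : (1 - ηε) * dist p q < ‖S p - S q‖ := by rw [hSsub]; exact hk₀
    have h2 : ‖S p - S q‖ ≤ ‖St p - St q‖ := by
      rw [hStnorm]
      nlinarith [norm_nonneg (S p - S q)]
    have h3 : (1 - ηh ε') * dist p q ≤ (1 - ηε) * dist p q := by nlinarith
    linarith
  obtain ⟨g, hg0, hgc, r, s, hrs, hgatt, hg1, hgSt, hclose⟩ :=
    hmain ε' hε'pos St ⟨⟨_, hStlip⟩, hSt0⟩ hStc hSt1 p q hpq hnear'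
  have hgd : ∀ x y : M, ‖g x - g y‖ ≤ dist x y := fun x y => by
    simpa [hg1] using norm_sub_le_lipNorm hg0.1 x y
  -- equicontinuity neighborhood of k₀
  have hAtb : TotallyBounded
      {y : C(K,Y) | ∃ p q : M, p ≠ q ∧ y = (dist p q)⁻¹ • (F p - F q)} :=
    hFc.totallyBounded.subset subset_closure
  obtain ⟨t, htfin, htcov⟩ := Metric.totallyBounded_iff.1 hAtb (ε'/3) (by linarith)
  set U : Set K := ⋂ y ∈ t, {k | dist (y k) (y k₀) < ε'/3} with hUdef
  have hUopen : IsOpen U := htfin.isOpen_biInter fun y _ =>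
    isOpen_lt ((map_continuous y).dist continuous_const) continuous_const
  have hk₀U : k₀ ∈ U := mem_iInter₂.2 fun y _ => by
    simp only [mem_setOf_eq, dist_self]; linarith
  have hAU : ∀ a ∈ {y : C(K,Y) | ∃ p q : M, p ≠ q ∧ y = (dist p q)⁻¹ • (F p - F q)},
      ∀ k ∈ U, ‖a k - a k₀‖ ≤ ε' := by
    intro a ha k hk
    obtain ⟨y, hyt, hay⟩ := mem_iUnion₂.1 (htcov ha)
    have h1 : dist (a k) (y k) ≤ dist a y := ContinuousMap.dist_apply_le_dist k
    have h2 : dist (a k₀) (y k₀) ≤ dist a y := ContinuousMap.dist_apply_le_dist k₀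
    have h3 : dist (y k) (y k₀) < ε'/3 := (mem_iInter₂.1 hk) y hyt
    have h4 : dist a y < ε'/3 := mem_ball.1 hay
    calc ‖a k - a k₀‖ = dist (a k) (a k₀) := (dist_eq_norm _ _).symm
      _ ≤ dist (a k) (y k) + dist (y k) (y k₀) + dist (y k₀) (a k₀) :=
          dist_triangle4 _ _ _ _
      _ ≤ dist a y + ε'/3 + dist a y := by
          have h5 : dist (y k₀) (a k₀) ≤ dist a y := by rw [dist_comm]; exact h2
          linarith
      _ ≤ ε' := by linarith
  have hEq : ∀ (x y : M), ∀ k ∈ U,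
      ‖(F x k - F y k) - (F x k₀ - F y k₀)‖ ≤ ε' * dist x y := by
    intro x y k hk
    rcases eq_or_ne x y with rfl | hxy
    · simp
    have hdxy : 0 < dist x y := dist_pos.2 hxy
    have ha := hAU ((dist x y)⁻¹ • (F x - F y)) ⟨x, y, hxy, rfl⟩ k hk
    rw [ContinuousMap.smul_apply, ContinuousMap.smul_apply, ContinuousMap.sub_apply,
      ContinuousMap.sub_apply, ← smul_sub, norm_smul, Real.norm_eq_abs,
      abs_of_nonneg (by positivity)] at ha
    have h6 := mul_le_mul_of_nonneg_left ha hdxy.le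
    rw [← mul_assoc, mul_inv_cancel₀ hdxy.ne', one_mul] at h6
    linarith [h6]
  -- Urysohn function
  obtain ⟨φ, hφ0, hφ1, hφmem⟩ := exists_continuous_zero_one_of_isClosed
    (isClosed_compl_iff.2 hUopen) (isClosed_singleton (x := k₀))
    (Set.disjoint_singleton_right.2 (not_not_intro hk₀U))
  have hφk₀ : φ k₀ = 1 := hφ1 rfl
  -- the perturbed map G
  set G : M → C(K,Y) := fun x =>
    ⟨fun k => φ k • g x + (1 - φ k) • F x k,
      ((map_continuous φ).smul continuous_const).add
        ((continuous_const.sub (map_continuous φ)).smul (map_continuous (F x)))⟩ with hGdef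
  have hGapp : ∀ (x : M) (k : K), G x k = φ k • g x + (1 - φ k) • F x k := fun x k => rfl
  have hGsub : ∀ (x y : M) (k : K),
      (G x - G y) k = φ k • (g x - g y) + (1 - φ k) • (F x k - F y k) := by
    intro x y k
    simp only [ContinuousMap.sub_apply, hGapp, smul_sub]
    abel
  have hGd : ∀ x y : M, ‖G x - G y‖ ≤ dist x y := by
    intro x y
    refine (ContinuousMap.norm_le _ dist_nonneg).2 fun k => ?_
    rw [hGsub]
    have hb1 : ‖g x - g y‖ ≤ dist x y := hgd x y
    have hb2 : ‖F x k - F y k‖ ≤ dist x y := (hFk x y k).trans (hFL x y)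
    calc ‖φ k • (g x - g y) + (1 - φ k) • (F x k - F y k)‖
        ≤ ‖φ k • (g x - g y)‖ + ‖(1 - φ k) • (F x k - F y k)‖ := norm_add_le _ _
      _ = φ k * ‖g x - g y‖ + (1 - φ k) * ‖F x k - F y k‖ := by
          rw [norm_smul, norm_smul, Real.norm_eq_abs, Real.norm_eq_abs,
            abs_of_nonneg (hφmem k).1, abs_of_nonneg (by linarith [(hφmem k).2])]
      _ ≤ φ k * dist x y + (1 - φ k) * dist x y :=
          add_le_add (mul_le_mul_of_nonneg_left hb1 (hφmem k).1)
            (mul_le_mul_of_nonneg_left hb2 (by linarith [(hφmem k).2]))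
      _ = dist x y := by ring
  have hG0 : G z = 0 := by
    ext k
    rw [hGapp, hg0.2, hF.2]
    simp
  have hGlip : LipschitzWith 1 G := LipschitzWith.of_dist_le_mul fun x y => by
    rw [dist_eq_norm]; simpa using hGd x y
  have hGk₀ : ∀ x y : M, (G x - G y) k₀ = g x - g y := by
    intro x y; rw [hGsub, hφk₀]; simp
  have hGrs : ‖G r - G s‖ = dist r s := by
    refine le_antisymm (hGd r s) ?_
    calc dist r s = ‖g r - g s‖ := hgatt.symm
      _ = ‖(G r - G s) k₀‖ := by rw [hGk₀]
      _ ≤ ‖G r - G s‖ := ContinuousMap.norm_coe_le_norm _ _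
  -- compactness of G
  have hGc : IsLipCompact G := by
    set Ψ : Y × C(K,Y) → C(K,Y) := fun ab =>
      ⟨fun k => φ k • ab.1 + (1 - φ k) • ab.2 k,
        ((map_continuous φ).smul continuous_const).add
          ((continuous_const.sub (map_continuous φ)).smul (map_continuous ab.2))⟩ with hΨdef
    have hΨcont : Continuous Ψ := by
      refine LipschitzWith.continuous (K := 2) (LipschitzWith.of_dist_le_mul fun a b => ?_)
      refine (ContinuousMap.dist_le (by positivity)).2 fun k => ?_
      have h1 : dist a.1 b.1 ≤ dist a b := by
        rw [Prod.dist_eq]; exact le_max_left _ _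
      have h2 : dist (a.2 k) (b.2 k) ≤ dist a b := by
        refine (ContinuousMap.dist_apply_le_dist k).trans ?_
        rw [Prod.dist_eq]; exact le_max_right _ _
      have hφk := hφmem k
      calc dist (Ψ a k) (Ψ b k)
          = ‖(φ k • a.1 + (1 - φ k) • a.2 k) - (φ k • b.1 + (1 - φ k) • b.2 k)‖ := by
            rw [dist_eq_norm]; rfl
        _ = ‖φ k • (a.1 - b.1) + (1 - φ k) • (a.2 k - b.2 k)‖ := by
            rw [smul_sub, smul_sub]; ring_nf; abel_nf
        _ ≤ φ k * ‖a.1 - b.1‖ + (1 - φ k) * ‖a.2 k - b.2 k‖ := by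
            refine (norm_add_le _ _).trans ?_
            rw [norm_smul, norm_smul, Real.norm_eq_abs, Real.norm_eq_abs,
              abs_of_nonneg hφk.1, abs_of_nonneg (by linarith [hφk.2])]
        _ ≤ φ k * dist a b + (1 - φ k) * dist a b := by
            rw [← dist_eq_norm, ← dist_eq_norm]
            have hd1 : dist a.1 b.1 ≤ dist a b := h1
            nlinarith [dist_nonneg (x := a) (y := b), hφk.1, hφk.2]
        _ = dist a b := by ring
        _ ≤ 2 * dist a b := by nlinarith [dist_nonneg (x := a) (y := b)]
    refine isCompact_closure_of_subset' ((hgc.prod hFc).image hΨcont) ?_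
    rintro w ⟨x, y, hxy, rfl⟩
    refine ⟨((dist x y)⁻¹ • (g x - g y), (dist x y)⁻¹ • (F x - F y)),
      Set.mk_mem_prod (subset_closure ⟨x, y, hxy, rfl⟩)
        (subset_closure ⟨x, y, hxy, rfl⟩), ?_⟩
    ext k
    simp only [hΨdef, ContinuousMap.coe_mk, ContinuousMap.smul_apply,
      ContinuousMap.sub_apply, hGsub, smul_add]
    rw [smul_comm (φ k), smul_comm ((1 : ℝ) - φ k)]
  -- closeness of G to F
  have hgStLip : ∃ Kc : ℝ≥0, LipschitzWith Kc (fun x => g x - St x) := by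
    obtain ⟨Kg, hKg⟩ := hg0.1
    exact ⟨Kg + Real.toNNReal L⁻¹, hKg.sub hStlip⟩
  have hGF : lipNorm (fun x => G x - F x) < ε := by
    set cg : ℝ := lipNorm (fun x => g x - St x) with hcgdef
    have hcg0 : 0 ≤ cg := lipNorm_nonneg _
    have key : ∀ x y : M,
        ‖(G x - F x) - (G y - F y)‖ ≤ (cg + ηε + ε') * dist x y := by
      intro x y
      refine (ContinuousMap.norm_le _ (by positivity)).2 fun k => ?_
      have hptw : ((G x - F x) - (G y - F y)) k
          = φ k • ((g x - g y) - (F x k - F y k)) := by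
        simp only [ContinuousMap.sub_apply, hGapp, smul_sub, sub_smul, one_smul]
        abel
      rw [hptw]
      rcases Classical.em (k ∈ U) with hkU | hkU
      · have hdec : (g x - g y) - (F x k - F y k)
            = ((g x - St x) - (g y - St y)) + (L⁻¹ - 1) • (S x - S y)
              + ((S x - S y) - (F x k - F y k)) := by
          have h1 : St x - St y = L⁻¹ • (S x - S y) := hStsub x y
          have h2 : (L⁻¹ - 1) • (S x - S y) = L⁻¹ • (S x - S y) - S x - (- S y) := by
            rw [sub_smul, one_smul]; abel
          rw [h2, ← h1]; abel
        have hT1 : ‖(g x - St x) - (g y - St y)‖ ≤ cg * dist x y :=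
          norm_sub_le_lipNorm hgStLip x y
        have hT2 : ‖(L⁻¹ - 1) • (S x - S y)‖ ≤ ηε * dist x y := by
          rw [norm_smul, Real.norm_eq_abs, abs_of_nonneg (by linarith)]
          have hb : ‖S x - S y‖ ≤ L * dist x y := by
            simpa using norm_sub_le_lipNorm ⟨1, hSlip⟩ x y
          have hLL : (L⁻¹ - 1) * L = 1 - L := by
            field_simp
          nlinarith [norm_nonneg (S x - S y), dist_nonneg (x := x) (y := y)]
        have hT3 : ‖(S x - S y) - (F x k - F y k)‖ ≤ ε' * dist x y := by
          have h7 : S x - S y = F x k₀ - F y k₀ := by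
            rw [hSsub, ContinuousMap.sub_apply]
          rw [h7, norm_sub_rev]
          exact hEq x y k hkU
        calc ‖φ k • ((g x - g y) - (F x k - F y k))‖
            ≤ ‖(g x - g y) - (F x k - F y k)‖ := by
              rw [norm_smul, Real.norm_eq_abs, abs_of_nonneg (hφmem k).1]
              nlinarith [norm_nonneg ((g x - g y) - (F x k - F y k)), (hφmem k).2]
          _ ≤ ‖(g x - St x) - (g y - St y)‖ + ‖(L⁻¹ - 1) • (S x - S y)‖
              + ‖(S x - S y) - (F x k - F y k)‖ := by
              rw [hdec]; exact norm_add₃_le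
          _ ≤ (cg + ηε + ε') * dist x y := by nlinarith
      · have hφ0k : φ k = 0 := hφ0 hkU
        rw [hφ0k, zero_smul, norm_zero]
        positivity
    have hle : lipNorm (fun x => G x - F x) ≤ cg + ηε + ε' :=
      lipNorm_le (by positivity) key
    have hcgε : cg < ε' := hgSt
    have : cg + ηε + ε' < 3 * ε' := by linarith
    linarith
  exact ⟨G, ⟨⟨1, hGlip⟩, hG0⟩, hGc, r, s, hrs, hGrs,
    lipNorm_eq_one hGd hrs hGrs, hGF, lt_of_lt_of_le hclose (by linarith)⟩
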